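/- As t → 1/2 from the right one has Φ(t)/ζ(t) = -v/3 + O(t - 1/2); in particular Φ(t)/ζ(t) converges to -v/3 as t → (1/2)⁺. -/

import Mathlib

open Complex ComplexConjugate Filter Topology

noncomputable section

/-- The Liouville–Green variable `ζ(t)`, given by
`(2/3)·(-ζ)^{3/2} = arccos(2t) - 2t·log((1+√(1-4t²))/(2t))` for `0 < t < 1/2` and
`(2/3)·ζ^{3/2} = πt - 2t·arcsin(1/(2t)) - log(2t+√(4t²-1))` for `t ≥ 1/2`. -/
def zetaFun (t : ℝ) : ℝ :=
  if t < 1 / 2 then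
    -((3 / 2) * (Real.arccos (2 * t) -
        2 * t * Real.log ((1 + Real.sqrt (1 - 4 * t ^ 2)) / (2 * t)))) ^ ((2 : ℝ) / 3)
  else
    ((3 / 2) * (Real.pi * t - 2 * t * Real.arcsin (1 / (2 * t)) -
        Real.log (2 * t + Real.sqrt (4 * t ^ 2 - 1)))) ^ ((2 : ℝ) / 3)

/-- The function `Φ(t)` (the value at `t = 1/2` is the one given by continuity, namely `0`). -/
def PhiFun (v : ℝ) (t : ℝ) : ℝ :=
  if t < 1 / 2 then
    v * (Real.log ((1 + Real.sqrt (1 - 4 * t ^ 2)) / (2 * t)) - Real.arccos (2 * t)) /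
      Real.sqrt (-zetaFun t)
  else
    v * (Real.pi / 2 - Real.arcsin (1 / (2 * t)) - Real.log (2 * t + Real.sqrt (4 * t ^ 2 - 1))) /
      Real.sqrt (zetaFun t)

namespace Stmt17Aux
open Real Set

def Lf (x : ℝ) : ℝ := Real.log ((Real.cos x)⁻¹ + Real.tan x)


lemma cos_pos_half {x : ℝ} (h0 : 0 ≤ x) (h1 : x ≤ 1/2) : 0 < Real.cos x := by
  apply Real.cos_pos_of_mem_Ioo
  constructor <;> nlinarith [Real.pi_gt_three]

lemma hasDerivAt_sec {x : ℝ} (hc : Real.cos x ≠ 0) :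
    HasDerivAt (fun y => (Real.cos y)⁻¹) (Real.sin x / Real.cos x ^ 2) x := by
  have := (Real.hasDerivAt_cos x).inv hc
  exact this.congr_deriv (by ring)

lemma hasDerivAt_Lf {x : ℝ} (h0 : 0 ≤ x) (h1 : x ≤ 1/2) :
    HasDerivAt Lf ((Real.cos x)⁻¹) x := by
  have hc := cos_pos_half h0 h1
  have hs : 0 ≤ Real.sin x := Real.sin_nonneg_of_nonneg_of_le_pi h0
    (by nlinarith [Real.pi_gt_three])
  have ht : 0 ≤ Real.tan x := by
    rw [Real.tan_eq_sin_div_cos]; positivity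
  have hne : (Real.cos x)⁻¹ + Real.tan x ≠ 0 := by positivity
  have hd : HasDerivAt (fun y => (Real.cos y)⁻¹ + Real.tan y)
      (Real.sin x / Real.cos x ^ 2 + 1 / Real.cos x ^ 2) x :=
    (hasDerivAt_sec hc.ne').add (Real.hasDerivAt_tan hc.ne')
  have := hd.log hne
  convert this using 1
  · rfl
  rw [Real.tan_eq_sin_div_cos]
  field_simp
  ring

lemma mono_help {f f' : ℝ → ℝ}
    (hd : ∀ x ∈ Icc (0:ℝ) (1/2), HasDerivAt f (f' x) x)
    (h0 : ∀ x ∈ Icc (0:ℝ) (1/2), 0 ≤ f' x) :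
    ∀ x ∈ Icc (0:ℝ) (1/2), f 0 ≤ f x := by
  intro x hx
  have hm : MonotoneOn f (Icc (0:ℝ) (1/2)) := by
    apply monotoneOn_of_deriv_nonneg (convex_Icc 0 (1/2))
    · exact fun y hy => (hd y hy).continuousAt.continuousWithinAt
    · exact fun y hy =>
        (hd y (interior_subset hy)).differentiableAt.differentiableWithinAt
    · intro y hy
      rw [(hd y (interior_subset hy)).deriv]
      exact h0 y (interior_subset hy)
  exact hm (by norm_num) hx hx.1

lemma lemA : ∀ x ∈ Icc (0:ℝ) (1/2),
    x^3/4 ≤ x * (Real.cos x)⁻¹ - Lf x := by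
  have h := mono_help (f := fun x => x * (Real.cos x)⁻¹ - Lf x - x^3/4)
      (f' := fun x => x * Real.sin x / Real.cos x ^ 2 - 3*x^2/4) ?_ ?_
  · intro x hx
    have := h x hx
    simp only [Lf] at this ⊢
    simp at this
    linarith
  · intro x hx
    have hc := cos_pos_half hx.1 hx.2
    have h1 : HasDerivAt (fun y => y * (Real.cos y)⁻¹)
        (1 * (Real.cos x)⁻¹ + x * (Real.sin x / Real.cos x ^ 2)) x :=
      (hasDerivAt_id x).mul (hasDerivAt_sec hc.ne')
    have h2 : HasDerivAt (fun y : ℝ => y^3/4) (3*x^2/4) x := by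
      simpa using (hasDerivAt_pow 3 x).div_const 4
    have := (h1.sub (hasDerivAt_Lf hx.1 hx.2)).sub h2
    refine this.congr_deriv ?_
    field_simp
    ring
  · intro x hx
    have hc := cos_pos_half hx.1 hx.2
    have hc1 : Real.cos x ≤ 1 := Real.cos_le_one x
    rcases eq_or_lt_of_le hx.1 with h | h
    · simp [← h]
    · have htan : x < Real.tan x := Real.lt_tan h (by nlinarith [Real.pi_gt_three, hx.2])
      rw [Real.tan_eq_sin_div_cos, lt_div_iff₀ hc] at htan
      have key : 3*x^2/4 * Real.cos x ^ 2 ≤ x * Real.sin x := by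
        nlinarith [mul_lt_mul_of_pos_left htan h,
          mul_nonneg (mul_nonneg h.le h.le) (mul_nonneg hc.le (sub_nonneg.2 hc1)),
          mul_nonneg (mul_nonneg h.le h.le) (sq_nonneg (Real.cos x))]
      have : 3*x^2/4 ≤ x * Real.sin x / Real.cos x ^ 2 := by
        rw [le_div_iff₀ (by positivity)]; linarith
      linarith

lemma absN : ∀ x ∈ Icc (0:ℝ) (1/2),
    |2*Real.cos x - 2*Real.cos x^2 - x*Real.sin x| ≤ x^4 := by
  intro x hx
  have hx1 : |x| ≤ 1 := by rw [_root_.abs_of_nonneg hx.1]; linarith [hx.2]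
  have hcb := Real.cos_bound hx1
  have hsb := Real.sin_bound hx1
  rw [_root_.abs_of_nonneg hx.1] at hcb hsb
  set e1 := Real.cos x - (1 - x^2/2) with he1def
  set e2 := Real.sin x - (x - x^3/6) with he2def
  have hid : 2*Real.cos x - 2*Real.cos x^2 - x*Real.sin x
      = -x^4/3 + e1*(2*x^2-2) - 2*e1^2 - x*e2 := by
    rw [he1def, he2def]; ring
  have h16 : x^4 ≤ 1/16 := by
    calc x^4 ≤ (1/2:ℝ)^4 := pow_le_pow_left₀ hx.1 hx.2 4
    _ = 1/16 := by norm_num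
  have hb1 : |e1 * (2*x^2-2)| ≤ (x^4*(5/96)) * 2 := by
    rw [abs_mul]
    apply mul_le_mul hcb _ (_root_.abs_nonneg _) (by positivity)
    rw [abs_le]; constructor <;> nlinarith [sq_nonneg x, hx.2, hx.1]
  have hb2 : |x * e2| ≤ (1/2) * (x^4*(5/96)) := by
    rw [abs_mul, _root_.abs_of_nonneg hx.1]
    apply mul_le_mul hx.2 (hsb.trans (by nlinarith [pow_nonneg hx.1 4, mul_le_mul_of_nonneg_right hx.2 (pow_nonneg hx.1 4)])) (_root_.abs_nonneg _) (by norm_num)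
  have hb3 : e1^2 ≤ (x^4*(5/96))^2 := by
    have := pow_le_pow_left₀ (_root_.abs_nonneg e1) hcb 2
    simpa [sq_abs] using this
  have hb3' : e1^2 ≤ (5/96)^2 * (1/16) * x^4 := by
    calc e1^2 ≤ (x^4*(5/96))^2 := hb3
    _ = (5/96)^2 * x^4 * x^4 := by ring
    _ ≤ (5/96)^2 * (1/16) * x^4 := by nlinarith [pow_nonneg hx.1 4]
  rw [hid, abs_le]
  have l1 := abs_le.1 hb1
  have l2 := abs_le.1 hb2
  have h4 : (0:ℝ) ≤ x^4 := pow_nonneg hx.1 4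
  constructor <;> nlinarith [sq_nonneg e1]

lemma absG' : ∀ x ∈ Icc (0:ℝ) (1/2),
    |2*(Real.cos x)⁻¹ - 2 - x*Real.sin x/Real.cos x^2| ≤ 2*x^4 := by
  intro x hx
  have hc := cos_pos_half hx.1 hx.2
  have hc78 : (7:ℝ)/8 ≤ Real.cos x := by
    have := Real.one_sub_sq_div_two_le_cos (x := x)
    nlinarith [hx.1, hx.2]
  have hcsq : (49:ℝ)/64 ≤ Real.cos x^2 := by nlinarith
  have heq : 2*(Real.cos x)⁻¹ - 2 - x*Real.sin x/Real.cos x^2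
      = (2*Real.cos x - 2*Real.cos x^2 - x*Real.sin x)/Real.cos x^2 := by
    field_simp
  rw [heq, abs_div, _root_.abs_of_nonneg (by positivity : (0:ℝ) ≤ Real.cos x^2),
    div_le_iff₀ (by positivity)]
  have hN := absN x hx
  nlinarith [hN, pow_nonneg hx.1 4, mul_le_mul_of_nonneg_left hcsq (pow_nonneg hx.1 4)]

lemma lemB : ∀ x ∈ Icc (0:ℝ) (1/2),
    |3 * Lf x - (2 + (Real.cos x)⁻¹) * x| ≤ x^5 := by
  have hdG : ∀ x ∈ Icc (0:ℝ) (1/2),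
      HasDerivAt (fun y => 3 * Lf y - (2 + (Real.cos y)⁻¹) * y)
        (2*(Real.cos x)⁻¹ - 2 - x*Real.sin x/Real.cos x^2) x := by
    intro x hx
    have hc := cos_pos_half hx.1 hx.2
    have h1 : HasDerivAt (fun y => (2 + (Real.cos y)⁻¹) * y)
        (Real.sin x / Real.cos x ^ 2 * x + (2 + (Real.cos x)⁻¹)) x := by
      exact
        (((hasDerivAt_const x (2:ℝ)).add (hasDerivAt_sec hc.ne')).mul (hasDerivAt_id x)).congr_deriv (by simp)
    have := ((hasDerivAt_Lf hx.1 hx.2).const_mul 3).sub h1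
    refine this.congr_deriv ?_
    field_simp
    ring
  have hP := mono_help (f := fun y => y^5 - (3 * Lf y - (2 + (Real.cos y)⁻¹) * y))
      (f' := fun x => 5*x^4 - (2*(Real.cos x)⁻¹ - 2 - x*Real.sin x/Real.cos x^2))
      (fun x hx => by exact ((hasDerivAt_pow 5 x).sub (hdG x hx)).congr_deriv (by norm_num))
      (fun x hx => by
        have := absG' x hx
        have h4 : 0 ≤ x^4 := pow_nonneg hx.1 4
        rw [abs_le] at this
        linarith [this.2])
  have hQ := mono_help (f := fun y => y^5 + (3 * Lf y - (2 + (Real.cos y)⁻¹) * y))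
      (f' := fun x => 5*x^4 + (2*(Real.cos x)⁻¹ - 2 - x*Real.sin x/Real.cos x^2))
      (fun x hx => by exact ((hasDerivAt_pow 5 x).add (hdG x hx)).congr_deriv (by norm_num))
      (fun x hx => by
        have := absG' x hx
        have h4 : 0 ≤ x^4 := pow_nonneg hx.1 4
        rw [abs_le] at this
        linarith [this.1])
  intro x hx
  have h1 := hP x hx
  have h2 := hQ x hx
  simp only [Lf] at h1 h2 ⊢
  simp at h1 h2
  rw [abs_le]
  constructor <;> linarith

set_option maxHeartbeats 1000000 in
lemma key (v t : ℝ) (ht1 : 1/2 < t) (ht2 : t < 1/2 + 1/20) :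
    |PhiFun v t / zetaFun t - (-v/3)| ≤ (8*|v|+1)*(t - 1/2) := by
  have ht0 : 0 < t := by linarith
  have h2t : 1 < 2*t := by linarith
  have hx0 : 0 < 1/(2*t) := by positivity
  have hx1 : 1/(2*t) < 1 := by rw [div_lt_one (by linarith)]; linarith
  set φ := Real.arccos (1/(2*t)) with hφdef
  have hφ0 : 0 < φ := by rw [hφdef]; exact Real.arccos_pos.2 hx1
  have hcos : Real.cos φ = 1/(2*t) := by
    rw [hφdef]; exact Real.cos_arccos (by linarith) hx1.le
  have hφle : φ ≤ 1/2 := by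
    by_contra hcon
    push_neg at hcon
    have hπ := Real.pi_gt_three
    have hmono : Real.cos φ < Real.cos (1/2) := by
      apply Real.strictAntiOn_cos (Set.mem_Icc.2 ⟨by norm_num, by linarith⟩)
        (Set.mem_Icc.2 ⟨Real.arccos_nonneg _, Real.arccos_le_pi _⟩) hcon
    have habs : |(1:ℝ)/2| = 1/2 := _root_.abs_of_nonneg (by norm_num)
    have hcb : Real.cos (1/2) ≤ 7/8 + 5/1536 := by
      have h := Real.cos_bound (x := (1/2:ℝ)) (by rw [habs]; norm_num)
      rw [abs_le, habs] at h
      nlinarith [h.2]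
    rw [hcos] at hmono
    have hlow : (10:ℝ)/11 < 1/(2*t) := by
      rw [lt_div_iff₀ (by linarith)]
      linarith
    linarith
  have hIcc : φ ∈ Icc (0:ℝ) (1/2) := ⟨hφ0.le, hφle⟩
  have hc := cos_pos_half hφ0.le hφle
  have hsec : (Real.cos φ)⁻¹ = 2*t := by rw [hcos]; field_simp
  have hsin : Real.sin φ = Real.sqrt (1 - (1/(2*t))^2) := by
    rw [hφdef]; exact Real.sin_arccos _
  have hs1 : (0:ℝ) ≤ 1 - (1/(2*t))^2 := by nlinarith
  have htan : Real.tan φ = Real.sqrt (4*t^2 - 1) := by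
    rw [Real.tan_eq_sin_div_cos, hsin, hcos]
    rw [show Real.sqrt (1 - (1/(2*t))^2) / (1/(2*t))
        = (2*t) * Real.sqrt (1 - (1/(2*t))^2) from by field_simp]
    rw [show (4*t^2 - 1 : ℝ) = (2*t)^2 * (1 - (1/(2*t))^2) from by field_simp; ring]
    rw [Real.sqrt_mul (by positivity) _, Real.sqrt_sq (by linarith)]
  have harcsin : Real.arcsin (1/(2*t)) = Real.pi/2 - φ := by
    rw [Real.arcsin_eq_pi_div_two_sub_arccos, ← hφdef]
  clear_value φ
  clear hφdef
  have hlog : Real.log (2*t + Real.sqrt (4*t^2-1)) = Lf φ := by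
    rw [Lf, hsec, htan]
  have hF4 : φ^3/4 ≤ φ*(2*t) - Lf φ := by
    have := lemA φ hIcc
    rwa [hsec] at this
  have hFpos : 0 < φ*(2*t) - Lf φ := lt_of_lt_of_le (by positivity) hF4
  have hFne : φ*(2*t) - Lf φ ≠ 0 := hFpos.ne'
  have hFeq : Real.pi * t - 2 * t * Real.arcsin (1 / (2 * t)) -
      Real.log (2 * t + Real.sqrt (4 * t ^ 2 - 1)) = φ*(2*t) - Lf φ := by
    rw [harcsin, hlog]; ring
  have hzeta : zetaFun t = ((3/2)*(φ*(2*t) - Lf φ)) ^ ((2:ℝ)/3) := by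
    rw [zetaFun, if_neg (by linarith : ¬ t < 1/2), hFeq]
  have hX : (0:ℝ) < (3/2)*(φ*(2*t) - Lf φ) := by linarith
  have hsqrt : Real.sqrt (zetaFun t) = ((3/2)*(φ*(2*t) - Lf φ)) ^ ((1:ℝ)/3) := by
    rw [hzeta, Real.sqrt_eq_rpow, ← Real.rpow_mul hX.le]
    norm_num
  have hPhi : PhiFun v t = v * (φ - Lf φ) / (((3/2)*(φ*(2*t) - Lf φ)) ^ ((1:ℝ)/3)) := by
    rw [PhiFun, if_neg (by linarith : ¬ t < 1/2), harcsin, hlog, hsqrt]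
    ring_nf
  have hmul : ((3/2)*(φ*(2*t) - Lf φ)) ^ ((1:ℝ)/3) * ((3/2)*(φ*(2*t) - Lf φ)) ^ ((2:ℝ)/3)
      = (3/2)*(φ*(2*t) - Lf φ) := by
    rw [← Real.rpow_add hX, show (1:ℝ)/3 + 2/3 = 1 by norm_num, Real.rpow_one]
  have hratio : PhiFun v t / zetaFun t = v * (φ - Lf φ) / ((3/2)*(φ*(2*t) - Lf φ)) := by
    rw [hPhi, hzeta, div_div, hmul]
  have heq2 : v * (φ - Lf φ) / ((3/2)*(φ*(2*t) - Lf φ)) - (-v/3)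
      = v * ((2+2*t)*φ - 3*Lf φ) / (3*(φ*(2*t) - Lf φ)) := by
    rw [div_sub_div _ _ (mul_ne_zero (by norm_num) hFne) (by norm_num : (3:ℝ) ≠ 0),
      div_eq_div_iff (mul_ne_zero (mul_ne_zero (by norm_num) hFne) (by norm_num))
        (mul_ne_zero (by norm_num) hFne)]
    ring
  have hGb : |(2+2*t)*φ - 3*Lf φ| ≤ φ^5 := by
    have := lemB φ hIcc
    rw [hsec] at this
    rw [abs_sub_comm] at this
    exact this
  -- cos bound to get φ² ≤ 6(t-1/2)
  have hy : (1/(2*t)) * (2*t) = 1 := by field_simp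
  have hcosub : 1 - Real.cos φ ≤ 2*(t - 1/2) := by
    rw [hcos]
    nlinarith [hy, mul_nonneg (sq_nonneg (2*t-1)) hx0.le]
  have hφ2 : φ^2 ≤ 1/4 := by nlinarith [hφ0.le, hφle]
  have hφsq : φ^2 ≤ 6*(t - 1/2) := by
    have hcb := Real.cos_bound (x := φ) (by rw [_root_.abs_of_nonneg hφ0.le]; linarith)
    rw [_root_.abs_of_nonneg hφ0.le, abs_le] at hcb
    have h4 : φ^4 ≤ φ^2/4 := by nlinarith [sq_nonneg φ]
    nlinarith [hcb.2, hcosub]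
  have h5 : |(2+2*t)*φ - 3*Lf φ| ≤ 6*(t-1/2)*φ^3 := by
    calc |(2+2*t)*φ - 3*Lf φ| ≤ φ^5 := hGb
    _ = φ^2 * φ^3 := by ring
    _ ≤ 6*(t-1/2)*φ^3 := mul_le_mul_of_nonneg_right hφsq (by positivity)
  rw [hratio, heq2]
  rw [show |v * ((2+2*t)*φ - 3*Lf φ) / (3*(φ*(2*t) - Lf φ))|
      = |v| * |(2+2*t)*φ - 3*Lf φ| / (3*(φ*(2*t) - Lf φ)) from by
    rw [abs_div, abs_mul, abs_of_pos (by linarith : (0:ℝ) < 3*(φ*(2*t) - Lf φ))]]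
  rw [div_le_iff₀ (by linarith : (0:ℝ) < 3*(φ*(2*t) - Lf φ))]
  have hstep : |v| * |(2+2*t)*φ - 3*Lf φ| ≤ |v| * (6*(t-1/2)*φ^3) :=
    mul_le_mul_of_nonneg_left h5 (_root_.abs_nonneg v)
  have h6 : (8*|v|+1)*(t-1/2) * (3*(φ^3/4)) ≤ (8*|v|+1)*(t-1/2) * (3*(φ*(2*t)-Lf φ)) := by
    apply mul_le_mul_of_nonneg_left (by linarith)
      (mul_nonneg (by positivity) (by linarith))
  nlinarith [_root_.abs_nonneg v, mul_nonneg (by linarith : (0:ℝ) ≤ t - 1/2) (pow_nonneg hφ0.le 3)]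

end Stmt17Aux

/-- As `t → (1/2)⁺`, `Φ(t)/ζ(t) = -v/3 + O(t - 1/2)`; in particular
`Φ(t)/ζ(t)` converges to `-v/3`. -/
theorem stmt_17 (a b c d : ℂ) (ha : 0 < a.re) (hb : 0 < b.re)
    (hc : c = (starRingEnd ℂ) a) (hd : d = (starRingEnd ℂ) b)
    (u v : ℝ) (hu : u = (a + b).re) (hv : v = (a + b).im) :
    (∃ δ > (0 : ℝ), ∃ C > (0 : ℝ), ∀ t : ℝ, 1 / 2 < t → t < 1 / 2 + δ →
        |PhiFun v t / zetaFun t - (-v / 3)| ≤ C * (t - 1 / 2)) ∧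
      Tendsto (fun t => PhiFun v t / zetaFun t) (nhdsWithin (1 / 2) (Set.Ioi (1 / 2)))
        (nhds (-v / 3)) := by
  constructor
  · exact ⟨1/20, by norm_num, 8*|v|+1, by positivity,
      fun t h1 h2 => Stmt17Aux.key v t h1 h2⟩
  · rw [tendsto_iff_dist_tendsto_zero]
    simp only [Real.dist_eq]
    have hmem : Set.Ioo (1/2:ℝ) (1/2+1/20) ∈ nhdsWithin (1/2 : ℝ) (Set.Ioi (1/2)) :=
      Ioo_mem_nhdsGT_of_mem (by norm_num)
    apply squeeze_zero' (g := fun t : ℝ => (8*|v|+1)*(t-1/2))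
      (Filter.Eventually.of_forall fun t => _root_.abs_nonneg _)
    · filter_upwards [hmem] with t ht
      exact Stmt17Aux.key v t ht.1 ht.2
    · have hcont : Tendsto (fun t : ℝ => (8*|v|+1)*(t-1/2)) (nhds (1/2:ℝ))
          (nhds ((8*|v|+1)*((1/2:ℝ)-1/2))) :=
        (continuous_const.mul (continuous_id.sub continuous_const)).tendsto _
      have := hcont.mono_left (nhdsWithin_le_nhds (s := Set.Ioi (1/2:ℝ)))
      simpa using this

end
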